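/- arXiv:1112.2405 — 3 statements merged into one kernel-verified Lean document; each statement's English description precedes it below -/
import Mathlib

section
/- Let G be an invertible symmetric 4×4 real matrix, u ∈ ℝ⁴ with uᵀGu = -1, and let κ, σ ∈ ℝ and ξ ∈ ℝ⁴. Define u♭ = Gu, P = G + u♭u♭ᵀ and Γ = G + 2u♭u♭ᵀ, and let M(ξ) be the symmetric 5×5 real matrix with entries M(ξ)₀₀ = κ²(ξᵀu), M(ξ)₀,(1+β) = M(ξ)_(1+β),0 = σκ·(P G⁻¹ ξ)_β for β = 0,1,2,3, and M(ξ)_(1+α),(1+β) = (ξᵀu)·Γ_{αβ} for α,β = 0,1,2,3. Then det M(ξ) = -κ² · det(G) · (ξᵀu)³ · ((ξᵀu)² - σ² · ξᵀ G⁻¹ P G⁻¹ ξ). -/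
/-!
With `t = ξᵀu` and `p = P G⁻¹ ξ`, the matrix `M(ξ)` is the bordered matrix with corner `κ² t`,
border `σκ p` and body `t Γ`, so `det M(ξ) = det Γ · t³ · (κ² t² - σ²κ² pᵀ Γ⁻¹ p)`; the bordered
determinant is computed for `t ≠ 0` by row reduction and extended to `t = 0` by continuity.
Since `u` is a unit timelike vector, `Γ = G (1 + 2 u u♭ᵀ)` has determinant `-det G` and inverse
`G⁻¹ + 2 u uᵀ`, while `P u = 0`; hence `Γ⁻¹ P = G⁻¹ P`, and together with `P G⁻¹ P = P` this
gives `pᵀ Γ⁻¹ p = ξᵀ G⁻¹ P G⁻¹ ξ`.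
-/

open Matrix

theorem det_eq_det_fromBlocks_fin_succ {R : Type*} [CommRing R] {n : ℕ}
    (M : Matrix (Fin (n + 1)) (Fin (n + 1)) R) :
    M.det = (fromBlocks (of fun _ _ => M 0 0) (replicateRow (Fin 1) fun j : Fin n => M 0 j.succ)
      (replicateCol (Fin 1) fun i : Fin n => M i.succ 0)
      (of fun i j : Fin n => M i.succ j.succ)).det := by
  let e : Fin 1 ⊕ Fin n ≃ Fin (n + 1) := finSumFinEquiv.trans (finCongr (Nat.add_comm 1 n))
  have he₀ (i : Fin 1) : e (.inl i) = 0 := by ext; simp [e]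
  have heₛ (j : Fin n) : e (.inr j) = j.succ := by ext; simp [e]
  rw [← det_submatrix_equiv_self e M]
  congr 1
  ext (i | i) (j | j) <;> simp [he₀, heₛ]

theorem mul_det_fromBlocks_smul_one {R : Type*} [CommRing R] {ι : Type*} [Fintype ι]
    [DecidableEq ι] (a t : R) (b c : ι → R) :
    t * (fromBlocks (of fun _ _ => a) (replicateRow (Fin 1) c) (replicateCol (Fin 1) b)
      (t • 1)).det = t ^ Fintype.card ι * (t * a - c ⬝ᵥ b) := by
  have h : fromBlocks (of fun _ _ => t) (replicateRow (Fin 1) (-c)) 0 1 *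
      fromBlocks (of fun _ _ => a) (replicateRow (Fin 1) c) (replicateCol (Fin 1) b) (t • 1) =
      fromBlocks (of fun _ _ => t * a - c ⬝ᵥ b) 0 (replicateCol (Fin 1) b) (t • 1) := by
    rw [fromBlocks_multiply]
    congr 1 <;> ext <;> simp [Matrix.mul_apply, dotProduct, sub_eq_add_neg, mul_comm]
  have := congrArg det h
  rw [det_mul, det_fromBlocks_zero₂₁, det_fromBlocks_zero₁₂] at this
  simpa [det_smul, mul_comm] using this

theorem det_fromBlocks_smul_one {n : ℕ} (a t : ℝ) (b c : Fin (n + 1) → ℝ) :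
    (fromBlocks (of fun _ _ => a) (replicateRow (Fin 1) c) (replicateCol (Fin 1) b)
      (t • 1)).det = t ^ n * (t * a - c ⬝ᵥ b) := by
  -- Both sides are continuous in `t`, and for `t ≠ 0` the factor `t` can be cancelled.
  revert t
  refine congrFun (Continuous.ext_on (dense_compl_singleton 0) (by fun_prop) (by fun_prop) ?_)
  intro t (ht : t ≠ 0)
  apply mul_left_cancel₀ ht
  rw [mul_det_fromBlocks_smul_one, Fintype.card_fin]
  ring

theorem det_fromBlocks_smul {n : ℕ} (a t : ℝ) (b c : Fin (n + 1) → ℝ)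
    {D : Matrix (Fin (n + 1)) (Fin (n + 1)) ℝ} (hD : IsUnit D.det) :
    (fromBlocks (of fun _ _ => a) (replicateRow (Fin 1) c) (replicateCol (Fin 1) b)
      (t • D)).det = D.det * t ^ n * (t * a - c ⬝ᵥ D⁻¹ *ᵥ b) := by
  have h : fromBlocks (of fun _ _ => a) (replicateRow (Fin 1) c) (replicateCol (Fin 1) b)
      (t • D) = fromBlocks (of fun _ _ => a) (replicateRow (Fin 1) (c ᵥ* D⁻¹))
        (replicateCol (Fin 1) b) (t • 1) * fromBlocks 1 0 0 D := by
    rw [fromBlocks_multiply]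
    simp [← replicateRow_vecMul, vecMul_vecMul, nonsing_inv_mul _ hD]
  rw [h, det_mul, det_fromBlocks_smul_one, det_fromBlocks_zero₁₂, det_one, one_mul,
    dotProduct_mulVec]
  ring

section RestFrame

variable {R : Type*} [CommRing R] {n : Type*} [Fintype n]

def projectionForm (G : Matrix n n R) (u : n → R) : Matrix n n R :=
  G + vecMulVec (G *ᵥ u) (G *ᵥ u)

def reflectionForm (G : Matrix n n R) (u : n → R) : Matrix n n R :=
  G + (2 : R) • vecMulVec (G *ᵥ u) (G *ᵥ u)

variable {G : Matrix n n R} {u : n → R}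

theorem projectionForm_isSymm (hG : G.IsSymm) : (projectionForm G u).IsSymm := by
  rw [projectionForm, IsSymm, transpose_add, transpose_vecMulVec, hG.eq]

theorem projectionForm_mulVec (hu : u ⬝ᵥ G *ᵥ u = -1) : projectionForm G u *ᵥ u = 0 := by
  rw [projectionForm, add_mulVec, vecMulVec_mulVec, dotProduct_comm, hu]
  simp

theorem vecMul_projectionForm (hG : G.IsSymm) (hu : u ⬝ᵥ G *ᵥ u = -1) :
    u ᵥ* projectionForm G u = 0 := by
  rw [← mulVec_transpose, (projectionForm_isSymm hG).eq, projectionForm_mulVec hu]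

variable [DecidableEq n]

theorem mulVec_vecMul_nonsing_inv_of_isSymm (hG : G.IsSymm) (hGinv : IsUnit G.det) :
    (G *ᵥ u) ᵥ* G⁻¹ = u := by
  rw [← hG.inv.eq, vecMul_transpose, mulVec_mulVec, nonsing_inv_mul _ hGinv, one_mulVec]

theorem projectionForm_mul_nonsing_inv (hG : G.IsSymm) (hGinv : IsUnit G.det) :
    projectionForm G u * G⁻¹ = 1 + vecMulVec (G *ᵥ u) u := by
  rw [projectionForm, add_mul, mul_nonsing_inv _ hGinv, vecMulVec_mul,
    mulVec_vecMul_nonsing_inv_of_isSymm hG hGinv]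

theorem projectionForm_mul_nonsing_inv_mul_self (hG : G.IsSymm) (hGinv : IsUnit G.det)
    (hu : u ⬝ᵥ G *ᵥ u = -1) :
    projectionForm G u * G⁻¹ * projectionForm G u = projectionForm G u := by
  rw [projectionForm_mul_nonsing_inv hG hGinv, add_mul, one_mul, vecMulVec_mul,
    vecMul_projectionForm hG hu, vecMulVec_zero, add_zero]

theorem det_reflectionForm (hu : u ⬝ᵥ G *ᵥ u = -1) : (reflectionForm G u).det = -G.det := by
  have h : reflectionForm G u =
      G * (1 + replicateCol Unit ((2 : R) • u) * replicateRow Unit (G *ᵥ u)) := by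
    rw [← vecMulVec_eq, Matrix.mul_add, mul_vecMulVec, mul_one, mulVec_smul, smul_vecMulVec,
      reflectionForm]
  rw [h, det_mul, det_one_add_replicateCol_mul_replicateRow, dotProduct_smul, dotProduct_comm, hu]
  ring

theorem reflectionForm_inv (hG : G.IsSymm) (hGinv : IsUnit G.det) (hu : u ⬝ᵥ G *ᵥ u = -1) :
    (reflectionForm G u)⁻¹ = G⁻¹ + (2 : R) • vecMulVec u u := by
  apply inv_eq_right_inv
  rw [reflectionForm, add_mul, mul_add, mul_add, mul_nonsing_inv _ hGinv, mul_smul_comm,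
    mul_vecMulVec, smul_mul_assoc, vecMulVec_mul, mulVec_vecMul_nonsing_inv_of_isSymm hG hGinv,
    smul_mul_smul_comm, vecMulVec_mul_vecMulVec, dotProduct_comm, hu, vecMulVec_smul]
  module

theorem reflectionForm_inv_mul_projectionForm (hG : G.IsSymm) (hGinv : IsUnit G.det)
    (hu : u ⬝ᵥ G *ᵥ u = -1) :
    (reflectionForm G u)⁻¹ * projectionForm G u = G⁻¹ * projectionForm G u := by
  rw [reflectionForm_inv hG hGinv hu, add_mul, smul_mul_assoc, vecMulVec_mul,
    vecMul_projectionForm hG hu, vecMulVec_zero, smul_zero, add_zero]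

theorem dotProduct_reflectionForm_inv_mulVec (hG : G.IsSymm) (hGinv : IsUnit G.det)
    (hu : u ⬝ᵥ G *ᵥ u = -1) (ξ : n → R) :
    (projectionForm G u * G⁻¹) *ᵥ ξ ⬝ᵥ
        (reflectionForm G u)⁻¹ *ᵥ ((projectionForm G u * G⁻¹) *ᵥ ξ) =
      ξ ⬝ᵥ (G⁻¹ * projectionForm G u * G⁻¹) *ᵥ ξ := by
  set P := projectionForm G u
  have hp : (P * G⁻¹) *ᵥ ξ = ξ ᵥ* (G⁻¹ * P) := by
    rw [← vecMul_transpose, transpose_mul, hG.inv.eq, (projectionForm_isSymm hG).eq]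
  have hPGP : G⁻¹ * P * (G⁻¹ * P * G⁻¹) = G⁻¹ * P * G⁻¹ := by
    rw [← Matrix.mul_assoc, Matrix.mul_assoc G⁻¹ P, ← Matrix.mul_assoc P,
      projectionForm_mul_nonsing_inv_mul_self hG hGinv hu]
  rw [mulVec_mulVec, ← Matrix.mul_assoc, reflectionForm_inv_mul_projectionForm hG hGinv hu, hp,
    ← dotProduct_mulVec, mulVec_mulVec, hPGP]

end RestFrame

/-- The determinant of the principal symbol `M(ξ) = ξ_ν A^ν` of the
symmetric-hyperbolic form of the relativistic Euler equations:
`det M(ξ) = -κ² det G (ξᵀu)³ ((ξᵀu)² - σ² ξᵀG⁻¹PG⁻¹ξ)`. -/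
theorem stmt2 (G : Matrix (Fin 4) (Fin 4) ℝ) (hG : G.IsSymm) (hGinv : IsUnit G.det)
    (u : Fin 4 → ℝ) (hu : u ⬝ᵥ G.mulVec u = -1)
    (κ σ : ℝ) (ξ : Fin 4 → ℝ)
    (M : Matrix (Fin 5) (Fin 5) ℝ)
    (hM00 : M 0 0 = κ ^ 2 * (ξ ⬝ᵥ u))
    (hM0r : ∀ β : Fin 4,
      M 0 β.succ =
        σ * κ * ((G + vecMulVec (G.mulVec u) (G.mulVec u)) * G⁻¹).mulVec ξ β)
    (hMc0 : ∀ β : Fin 4,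
      M β.succ 0 =
        σ * κ * ((G + vecMulVec (G.mulVec u) (G.mulVec u)) * G⁻¹).mulVec ξ β)
    (hMrc : ∀ α β : Fin 4,
      M α.succ β.succ =
        (ξ ⬝ᵥ u) * (G + (2 : ℝ) • vecMulVec (G.mulVec u) (G.mulVec u)) α β) :
    M.det = -(κ ^ 2) * G.det * (ξ ⬝ᵥ u) ^ 3 *
      ((ξ ⬝ᵥ u) ^ 2 -
        σ ^ 2 *
          (ξ ⬝ᵥ (G⁻¹ * (G + vecMulVec (G.mulVec u) (G.mulVec u)) * G⁻¹).mulVec ξ)) := by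
  change M.det = -(κ ^ 2) * G.det * (ξ ⬝ᵥ u) ^ 3 *
    ((ξ ⬝ᵥ u) ^ 2 - σ ^ 2 * (ξ ⬝ᵥ (G⁻¹ * projectionForm G u * G⁻¹) *ᵥ ξ))
  set t := ξ ⬝ᵥ u
  set p := (projectionForm G u * G⁻¹) *ᵥ ξ
  have hblocks : M.det = (fromBlocks (of fun _ _ => κ ^ 2 * t)
      (replicateRow (Fin 1) ((σ * κ) • p)) (replicateCol (Fin 1) ((σ * κ) • p))
      (t • reflectionForm G u)).det := by
    rw [det_eq_det_fromBlocks_fin_succ]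
    congr <;> ext <;> simp [hM00, hM0r, hMc0, hMrc, p, t, projectionForm, reflectionForm]
  have hΓ : IsUnit (reflectionForm G u).det := by
    rw [det_reflectionForm hu]
    exact hGinv.neg
  rw [hblocks, det_fromBlocks_smul _ _ _ _ hΓ, det_reflectionForm hu, mulVec_smul,
    dotProduct_smul, smul_dotProduct, dotProduct_reflectionForm_inv_mulVec hG hGinv hu]
  simp only [smul_eq_mul]
  ring
end

section
/- Let G be a symmetric 4×4 real matrix of Lorentzian signature (there exists an invertible S with SᵀGS = diag(-1,1,1,1)) that is invertible with (G⁻¹)₀₀ < 0, let u ∈ ℝ⁴ satisfy uᵀGu = -1, and let σ ∈ ℝ with σ² < 1. Write u⁰ for the 0-th component of u, let e₀ = (1,0,0,0) ∈ ℝ⁴, and set P = G + (Gu)(Gu)ᵀ. Then (e₀ᵀu)² - σ² · e₀ᵀ G⁻¹ P G⁻¹ e₀ = (u⁰)²(1-σ²) - σ²(G⁻¹)₀₀, and this quantity is strictly positive. -/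
open Matrix

lemma vmv_mulVec (w v x : Fin 4 → ℝ) :
    (vecMulVec w v).mulVec x = (v ⬝ᵥ x) • w := by
  ext i
  simp [Matrix.mulVec, vecMulVec_apply, dotProduct, Finset.mul_sum, Finset.sum_mul,
    mul_assoc, mul_comm, mul_left_comm]

lemma mink (a0 a1 a2 a3 b0 b1 b2 b3 : ℝ)
    (ha : -a0^2 + a1^2 + a2^2 + a3^2 < 0)
    (hb : -b0^2 + b1^2 + b2^2 + b3^2 < 0)
    (hc : -a0*b0 + a1*b1 + a2*b2 + a3*b3 = 0) : False := by
  have hA : (0:ℝ) ≤ a1^2 + a2^2 + a3^2 := by positivity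
  have hB : (0:ℝ) ≤ b1^2 + b2^2 + b3^2 := by positivity
  have hb0 : (0:ℝ) < b0^2 := by linarith
  have hL : (a1*b1 + a2*b2 + a3*b3)^2 ≤ (a1^2+a2^2+a3^2) * (b1^2+b2^2+b3^2) := by
    nlinarith [sq_nonneg (a1*b2 - a2*b1), sq_nonneg (a1*b3 - a3*b1),
      sq_nonneg (a2*b3 - a3*b2)]
  have h1 : (a1^2+a2^2+a3^2) * (b1^2+b2^2+b3^2) ≤ (a1^2+a2^2+a3^2) * b0^2 :=
    mul_le_mul_of_nonneg_left (by linarith) hA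
  have h2 : (a1^2+a2^2+a3^2) * b0^2 < a0^2 * b0^2 :=
    mul_lt_mul_of_pos_right (by linarith) hb0
  have hC : a1*b1 + a2*b2 + a3*b3 = a0*b0 := by linarith
  rw [hC] at hL
  have hpow : (a0*b0)^2 = a0^2 * b0^2 := by ring
  linarith

lemma quad_change (S G : Matrix (Fin 4) (Fin 4) ℝ) (x y : Fin 4 → ℝ) :
    x ⬝ᵥ (Sᵀ * G * S).mulVec y = (S.mulVec x) ⬝ᵥ G.mulVec (S.mulVec y) := by
  rw [← Matrix.mulVec_mulVec, ← Matrix.mulVec_mulVec, Matrix.dotProduct_mulVec,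
    Matrix.vecMul_transpose]

/-- The covector `e₀ = (1,0,0,0)` lies inside the sound cone: for a Lorentzian
metric `G` with `g⁰⁰ = (G⁻¹)₀₀ < 0`, a unit timelike vector `u` and sound speed
`σ` with `σ² < 1`, one has
`(e₀ᵀu)² - σ² e₀ᵀG⁻¹PG⁻¹e₀ = (u⁰)²(1-σ²) - σ²(G⁻¹)₀₀ > 0`. -/
theorem stmt5 (G : Matrix (Fin 4) (Fin 4) ℝ) (hG : G.IsSymm)
    (hLor : ∃ S : Matrix (Fin 4) (Fin 4) ℝ,
      IsUnit S.det ∧ Sᵀ * G * S = Matrix.diagonal ![(-1 : ℝ), 1, 1, 1])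
    (hGinv : IsUnit G.det) (hG00 : G⁻¹ 0 0 < 0)
    (u : Fin 4 → ℝ) (hu : u ⬝ᵥ G.mulVec u = -1)
    (σ : ℝ) (hσ : σ ^ 2 < 1) :
    ((Pi.single 0 1 : Fin 4 → ℝ) ⬝ᵥ u) ^ 2 -
        σ ^ 2 *
          ((Pi.single 0 1 : Fin 4 → ℝ) ⬝ᵥ
            (G⁻¹ * (G + vecMulVec (G.mulVec u) (G.mulVec u)) * G⁻¹).mulVec
              (Pi.single 0 1 : Fin 4 → ℝ)) =
      (u 0) ^ 2 * (1 - σ ^ 2) - σ ^ 2 * G⁻¹ 0 0 ∧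
    0 < (u 0) ^ 2 * (1 - σ ^ 2) - σ ^ 2 * G⁻¹ 0 0 := by
  obtain ⟨S, hSdet, hSG⟩ := hLor
  set e₀ : Fin 4 → ℝ := Pi.single 0 1 with he0
  have hGG : G * G⁻¹ = 1 := Matrix.mul_nonsing_inv G hGinv
  have hGiG : G⁻¹ * G = 1 := Matrix.nonsing_inv_mul G hGinv
  set v : Fin 4 → ℝ := G⁻¹.mulVec e₀ with hv
  set w : Fin 4 → ℝ := G.mulVec u with hw
  have hGv : G.mulVec v = e₀ := by
    rw [hv, Matrix.mulVec_mulVec, hGG, Matrix.one_mulVec]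
  have hvG : v ᵥ* G = e₀ := by
    have h := Matrix.vecMul_transpose G v
    rw [hG.eq] at h
    rwa [← h] at hGv
  have he0u : e₀ ⬝ᵥ u = u 0 := by simp [he0, single_dotProduct]
  have hv0 : v 0 = G⁻¹ 0 0 := by
    simp [hv, Matrix.mulVec_single, he0]
  have hGu : G *ᵥ u = u ᵥ* G := by
    have h := Matrix.vecMul_transpose G u
    rw [hG.eq] at h
    exact h.symm
  have hwv : w ⬝ᵥ v = u 0 := by
    rw [hw, hv, Matrix.dotProduct_mulVec, hGu, Matrix.vecMul_vecMul, hGG,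
      Matrix.vecMul_one, dotProduct_comm, he0u]
  have hGiw : G⁻¹.mulVec w = u := by
    rw [hw, Matrix.mulVec_mulVec, hGiG, Matrix.one_mulVec]
  -- the equality
  have h1 : (G + vecMulVec w w) *ᵥ v = e₀ + (w ⬝ᵥ v) • w := by
    rw [Matrix.add_mulVec, vmv_mulVec, hGv]
  have h2 : G⁻¹ *ᵥ (e₀ + (w ⬝ᵥ v) • w) = v + (w ⬝ᵥ v) • u := by
    rw [Matrix.mulVec_add, Matrix.mulVec_smul, hGiw, hv]
  have heq : e₀ ⬝ᵥ (G⁻¹ * (G + vecMulVec w w) * G⁻¹).mulVec e₀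
      = G⁻¹ 0 0 + u 0 * u 0 := by
    rw [← Matrix.mulVec_mulVec, ← Matrix.mulVec_mulVec, ← hv, h1, h2]
    simp [dotProduct_add, dotProduct_smul, he0, single_dotProduct, hv0, hwv,
      smul_eq_mul]
  -- positivity
  have hvGv : v ⬝ᵥ G.mulVec v = G⁻¹ 0 0 := by
    rw [hGv, dotProduct_comm, he0, single_dotProduct, one_mul,
      show v 0 = G⁻¹ 0 0 from hv0]
  have hvGu : v ⬝ᵥ G.mulVec u = u 0 := by
    rw [Matrix.dotProduct_mulVec, hvG, he0u]
  have hSS : S * S⁻¹ = 1 := Matrix.mul_nonsing_inv S hSdet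
  set a : Fin 4 → ℝ := S⁻¹.mulVec u with hadef
  set b : Fin 4 → ℝ := S⁻¹.mulVec v with hbdef
  have hua : S.mulVec a = u := by
    rw [hadef, Matrix.mulVec_mulVec, hSS, Matrix.one_mulVec]
  have hvb : S.mulVec b = v := by
    rw [hbdef, Matrix.mulVec_mulVec, hSS, Matrix.one_mulVec]
  have ha : a ⬝ᵥ (Matrix.diagonal ![(-1:ℝ),1,1,1]).mulVec a = -1 := by
    rw [← hSG, quad_change, hua, hu]
  have hb : b ⬝ᵥ (Matrix.diagonal ![(-1:ℝ),1,1,1]).mulVec b = G⁻¹ 0 0 := by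
    rw [← hSG, quad_change, hvb, hvGv]
  have hc : b ⬝ᵥ (Matrix.diagonal ![(-1:ℝ),1,1,1]).mulVec a = u 0 := by
    rw [← hSG, quad_change, hvb, hua, hvGu]
  have hdiag : ∀ x y : Fin 4 → ℝ, x ⬝ᵥ (Matrix.diagonal ![(-1:ℝ),1,1,1]).mulVec y
      = -(x 0 * y 0) + x 1 * y 1 + x 2 * y 2 + x 3 * y 3 := by
    intro x y
    simp [Matrix.mulVec, dotProduct, Matrix.diagonal, Fin.sum_univ_four]
  rw [hdiag] at ha hb hc
  have hu0 : u 0 ≠ 0 := by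
    intro h
    rw [h] at hc
    exact mink (a 0) (a 1) (a 2) (a 3) (b 0) (b 1) (b 2) (b 3)
      (by nlinarith) (by nlinarith) (by linarith)
  refine ⟨by rw [he0u, heq]; ring, ?_⟩
  have hp1 : 0 < (u 0)^2 * (1 - σ^2) :=
    mul_pos (by positivity) (by linarith)
  have hp2 : σ^2 * G⁻¹ 0 0 ≤ 0 :=
    mul_nonpos_of_nonneg_of_nonpos (sq_nonneg σ) (le_of_lt hG00)
  linarith
end

section
/- Let N be a positive integer, δ ∈ ℝ, T > 0, c₀ ≥ 1 and a, a', τ, b ≥ 0. Let A⁰, A¹, A², A³ : [0,T] × ℝ³ → Mat_{N×N}(ℝ) be continuously differentiable matrix-valued functions, symmetric at every point, such that for all (t,x): c₀⁻¹|V|² ≤ Vᵀ A⁰(t,x) V ≤ c₀|V|² for all V ∈ ℝ^N, the operator norms satisfy ‖A^a(t,x)‖ ≤ a for a = 1,2,3, Σ_{a=1}^3 ‖∂_{x_a}A^a(t,x)‖ ≤ a', and ‖∂_t A⁰(t,x)‖ ≤ τ. Let B : [0,T] × ℝ³ → Mat_{N×N}(ℝ) be continuous with ‖B(t,x)‖ ≤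 b, and let F : [0,T] × ℝ³ → ℝ^N be continuous with ∫(1+|x|)^{2δ}|F(t,x)|²dx < ∞ for each t. Suppose U : [0,T] × ℝ³ → ℝ^N is continuously differentiable, has support contained in [0,T] × K for some compact K ⊆ ℝ³, and satisfies A⁰ ∂_t U = Σ_{a=1}^3 A^a ∂_{x_a} U + B U + F on [0,T] × ℝ³. Then there exists a constant C > 0, depending only on δ, c₀, a, a', τ and b, such that the energy E(t) = ∫_{ℝ³}(1+|x|)^{2δ} U(t,x)ᵀ A⁰(t,x) U(t,x) dx satisfies E'(t) ≤ C·(E(t) + ∫_{ℝ³}(1+|x|)^{2δ}|F(t,x)|² dx) for every t ∈ (0,T). -/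
/-!
The energy `E(t) = ∫ w Uᵀ A⁰ U`, with `w = (1 + |x|)^{2δ}`, is differentiated under the integral
sign. By the symmetry of `A⁰` and the `Aᵃ` and the equation, the time derivative of the density
`Uᵀ A⁰ U` is `Σₐ ∂ₐ(Uᵀ Aᵃ U)` plus terms bounded by `|U|²` and `|F|²`. Against the weight, each
divergence integrates to `-∫ Uᵀ Aᵃ U ∂ₐw` (divergence theorem on a box containing the support;
the weight is only differentiable off the origin, which is harmless), and `|∂ₐw| ≤ 2|δ| w`.
Every term is then bounded by `|U|² ≤ c₀ Uᵀ A⁰ U` and `|F|²` against `w`.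
-/

open MeasureTheory Matrix

noncomputable def pderiv3 {F : Type*} [NormedAddCommGroup F] [NormedSpace ℝ F]
    (i : Fin 3) (u : EuclideanSpace ℝ (Fin 3) → F) : EuclideanSpace ℝ (Fin 3) → F :=
  fun x => fderiv ℝ u x (EuclideanSpace.single i 1)

section QuadraticForm

variable {n : Type*} [Fintype n]

theorem abs_dotProduct_mulVec_le {u : n → ℝ} {M : Matrix n n ℝ} {m : ℝ} (hm : 0 ≤ m)
    (hM : ∀ j k, |M j k| ≤ m) : |u ⬝ᵥ M *ᵥ u| ≤ m * Fintype.card n * (u ⬝ᵥ u) := by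
  have hcs : (∑ j, |u j|) ^ 2 ≤ Fintype.card n * (u ⬝ᵥ u) := by
    simpa [dotProduct, sq_abs, ← sq] using
      sq_sum_le_card_mul_sum_sq (s := Finset.univ) (f := fun j => |u j|)
  calc |u ⬝ᵥ M *ᵥ u| ≤ ∑ j, ∑ k, |u j| * (m * |u k|) := by
        simp only [dotProduct, mulVec, Finset.mul_sum]
        refine (Finset.abs_sum_le_sum_abs _ _).trans (Finset.sum_le_sum fun j _ => ?_)
        refine (Finset.abs_sum_le_sum_abs _ _).trans (Finset.sum_le_sum fun k _ => ?_)
        rw [abs_mul, abs_mul]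
        gcongr
        exact hM j k
    _ = m * (∑ j, |u j|) ^ 2 := by
        rw [sq, Finset.sum_mul_sum, Finset.mul_sum]
        exact Finset.sum_congr rfl fun _ _ => by rw [Finset.mul_sum]; congr 1; ext; ring
    _ ≤ m * Fintype.card n * (u ⬝ᵥ u) := by
        rw [mul_assoc]; gcongr

theorem two_mul_dotProduct_le (u v : n → ℝ) : 2 * (u ⬝ᵥ v) ≤ u ⬝ᵥ u + v ⬝ᵥ v := by
  have := dotProduct_star_self_nonneg (u - v)
  simp only [star_trivial, sub_dotProduct, dotProduct_sub, dotProduct_comm v u] at this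
  linarith

theorem dotProduct_self_le_card_mul_norm_sq (v : n → ℝ) :
    v ⬝ᵥ v ≤ Fintype.card n * ‖v‖ ^ 2 := by
  calc v ⬝ᵥ v ≤ ∑ _j : n, ‖v‖ ^ 2 := Finset.sum_le_sum fun j _ => by
        rw [← sq, ← sq_abs, ← Real.norm_eq_abs]
        gcongr
        exact norm_le_pi_norm v j
    _ = _ := by simp

theorem lowerOrderTerms_le {ι : Type*} [Fintype ι] {u f : n → ℝ} {M₀ B : Matrix n n ℝ}
    {D : ι → Matrix n n ℝ} {τ a' b : ℝ} (hτ : 0 ≤ τ) (ha' : 0 ≤ a') (hb : 0 ≤ b)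
    (hM₀ : ∀ j k, |M₀ j k| ≤ τ) (hD : ∀ j k, ∑ i, |D i j k| ≤ a') (hB : ∀ j k, |B j k| ≤ b) :
    u ⬝ᵥ M₀ *ᵥ u - ∑ i, u ⬝ᵥ D i *ᵥ u + 2 * (u ⬝ᵥ B *ᵥ u) + 2 * (u ⬝ᵥ f) ≤
      (Fintype.card n * (τ + a' + 2 * b) + 1) * (u ⬝ᵥ u) + Fintype.card n * ‖f‖ ^ 2 := by
  have hM₀u := (abs_le.1 (abs_dotProduct_mulVec_le (u := u) hτ hM₀)).2
  have hDu := (abs_le.1 (abs_dotProduct_mulVec_le (u := u) (M := ∑ i, D i) ha' fun j k => by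
    simpa only [Matrix.sum_apply] using (Finset.abs_sum_le_sum_abs _ _).trans (hD j k))).1
  have hBu := (abs_le.1 (abs_dotProduct_mulVec_le (u := u) hb hB)).2
  have hf := two_mul_dotProduct_le u f
  have hff := dotProduct_self_le_card_mul_norm_sq f
  rw [← dotProduct_sum, ← sum_mulVec]
  linarith

theorem HasDerivAt.dotProduct_mulVec_self {u : ℝ → n → ℝ} {M : ℝ → Matrix n n ℝ}
    {u' : n → ℝ} {M' : Matrix n n ℝ} {t : ℝ} (hu : HasDerivAt u u' t)
    (hM : ∀ j k, HasDerivAt (fun s => M s j k) (M' j k) t) (hsymm : (M t).IsSymm) :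
    HasDerivAt (fun s => u s ⬝ᵥ M s *ᵥ u s)
      (u t ⬝ᵥ M' *ᵥ u t + 2 * (u t ⬝ᵥ M t *ᵥ u')) t := by
  have hu' : ∀ j, HasDerivAt (fun s => u s j) (u' j) t := hasDerivAt_pi.1 hu
  have hsum : HasDerivAt (fun s => u s ⬝ᵥ M s *ᵥ u s)
      (∑ j, (u' j * ∑ k, M t j k * u t k + u t j * ∑ k, (M' j k * u t k + M t j k * u' k))) t :=
    HasDerivAt.fun_sum fun j _ =>
      (hu' j).mul (HasDerivAt.fun_sum fun k _ => (hM j k).mul (hu' k))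
  refine hsum.congr_deriv ?_
  have hswap : u' ⬝ᵥ M t *ᵥ u t = u t ⬝ᵥ M t *ᵥ u' := by
    rw [dotProduct_mulVec, ← mulVec_transpose, hsymm.eq, dotProduct_comm]
  have hexp : u' ⬝ᵥ M t *ᵥ u t + u t ⬝ᵥ M' *ᵥ u t + u t ⬝ᵥ M t *ᵥ u' =
      ∑ j, (u' j * ∑ k, M t j k * u t k + u t j * ∑ k, (M' j k * u t k + M t j k * u' k)) := by
    simp only [dotProduct, mulVec, Finset.sum_add_distrib, mul_add]
    ring
  rw [← hexp, hswap]
  ring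

variable {E : Type*} [NormedAddCommGroup E] [NormedSpace ℝ E]

theorem DifferentiableAt.dotProduct_mulVec {u v : E → n → ℝ} {M : E → Matrix n n ℝ} {x : E}
    (hu : DifferentiableAt ℝ u x) (hv : DifferentiableAt ℝ v x)
    (hM : ∀ j k, DifferentiableAt ℝ (fun y => M y j k) x) :
    DifferentiableAt ℝ (fun y => u y ⬝ᵥ M y *ᵥ v y) x := by
  simp only [dotProduct, mulVec]
  have hu' := differentiableAt_pi.1 hu
  have hv' := differentiableAt_pi.1 hv
  fun_prop

theorem ContDiff.dotProduct_mulVec {k : WithTop ℕ∞} {u v : E → n → ℝ} {M : E → Matrix n n ℝ}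
    (hu : ContDiff ℝ k u) (hv : ContDiff ℝ k v) (hM : ∀ j l, ContDiff ℝ k (fun y => M y j l)) :
    ContDiff ℝ k (fun y => u y ⬝ᵥ M y *ᵥ v y) := by
  simp only [dotProduct, mulVec]
  have hu' := contDiff_pi.1 hu
  have hv' := contDiff_pi.1 hv
  fun_prop

theorem fderiv_dotProduct_mulVec_self_apply {u : E → n → ℝ} {M : E → Matrix n n ℝ} {x : E}
    (hu : DifferentiableAt ℝ u x) (hM : ∀ j k, DifferentiableAt ℝ (fun y => M y j k) x)
    (hsymm : (M x).IsSymm) (v : E) :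
    fderiv ℝ (fun y => u y ⬝ᵥ M y *ᵥ u y) x v =
      u x ⬝ᵥ (of fun j k => fderiv ℝ (fun y => M y j k) x v) *ᵥ u x
        + 2 * (u x ⬝ᵥ M x *ᵥ fderiv ℝ u x v) := by
  have hline := HasDerivAt.dotProduct_mulVec_self
    (M' := of fun j k => fderiv ℝ (fun y => M y j k) x v) (hu.hasFDerivAt.hasLineDerivAt v)
    (fun j k => (hM j k).hasFDerivAt.hasLineDerivAt v) (by simpa using hsymm)
  simp only [zero_smul, add_zero] at hline
  exact ((hu.dotProduct_mulVec hu hM).hasFDerivAt.hasLineDerivAt v).unique hline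

end QuadraticForm

section Calculus

variable {E : Type*} [NormedAddCommGroup E] [NormedSpace ℝ E]

theorem DifferentiableAt.hasDerivAt_apply_prodMk {F : Type*} [NormedAddCommGroup F]
    [NormedSpace ℝ F] {f : ℝ × E → F} {t : ℝ} {x : E} (hf : DifferentiableAt ℝ f (t, x)) :
    HasDerivAt (fun s => f (s, x)) (fderiv ℝ f (t, x) (1, 0)) t :=
  hf.hasFDerivAt.comp_hasDerivAt t ((hasDerivAt_id t).prodMk (hasDerivAt_const t x))

theorem hasDerivAt_integral_mul_of_contDiff [MeasurableSpace E] [OpensMeasurableSpace E]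
    {μ : Measure E} [IsFiniteMeasureOnCompacts μ] {w : E → ℝ} (hw : Continuous w)
    {f : ℝ × E → ℝ} (hf : ContDiff ℝ 1 f) {K : Set E} (hK : IsCompact K) {S : Set ℝ}
    (hS : IsOpen S) (hf0 : ∀ s ∈ S, ∀ x ∉ K, f (s, x) = 0) {t : ℝ} (ht : t ∈ S) :
    HasDerivAt (fun s => ∫ x, w x * f (s, x) ∂μ)
      (∫ x, w x * fderiv ℝ f (t, x) (1, 0) ∂μ) t := by
  obtain ⟨ε, hε, hεS⟩ := Metric.isOpen_iff.1 hS t ht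
  have hf' : Continuous fun p => fderiv ℝ f p (1, 0) :=
    (hf.continuous_fderiv one_ne_zero).clm_apply continuous_const
  have hderiv : ∀ s x, HasDerivAt (fun s => f (s, x)) (fderiv ℝ f (s, x) (1, 0)) s :=
    fun s x => (hf.differentiable one_ne_zero (s, x)).hasDerivAt_apply_prodMk
  have hf'0 : ∀ s ∈ S, ∀ x ∉ K, fderiv ℝ f (s, x) (1, 0) = 0 := fun s hs x hx =>
    (hderiv s x).unique ((hasDerivAt_const s 0).congr_of_eventuallyEq
      (Filter.eventually_of_mem (hS.mem_nhds hs) fun s' hs' => hf0 s' hs' x hx))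
  obtain ⟨M, hM⟩ := ((isCompact_closedBall t ε).prod hK).exists_bound_of_continuousOn
    ((hw.comp continuous_snd).mul hf').continuousOn
  have hbound : ∀ x, ∀ s ∈ Metric.ball t ε,
      ‖w x * fderiv ℝ f (s, x) (1, 0)‖ ≤ K.indicator (fun _ => M) x := by
    intro x s hs
    by_cases hx : x ∈ K
    · rw [Set.indicator_of_mem hx]
      exact hM (s, x) ⟨Metric.ball_subset_closedBall hs, hx⟩
    · rw [Set.indicator_of_notMem hx, hf'0 s (hεS hs) x hx, mul_zero, norm_zero]
  have hslice : ∀ s, Continuous fun x => w x * f (s, x) := fun s =>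
    hw.mul (hf.continuous.comp (Continuous.prodMk_right s))
  refine (hasDerivAt_integral_of_dominated_loc_of_deriv_le (Metric.ball_mem_nhds t hε)
    (Filter.Eventually.of_forall fun s => (hslice s).aestronglyMeasurable)
    ((hslice t).integrable_of_hasCompactSupport (HasCompactSupport.intro hK fun x hx => by
      rw [hf0 t ht x hx, mul_zero]))
    (hw.mul (hf'.comp (Continuous.prodMk_right t))).aestronglyMeasurable
    (Filter.Eventually.of_forall hbound)
    ((integrable_indicator_iff hK.measurableSet).2 (integrableOn_const hK.measure_lt_top.ne))
    (Filter.Eventually.of_forall fun x s _ => (hderiv s x).const_mul (w x))).2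

theorem integrable_fderiv_mul_apply [MeasurableSpace E] [BorelSpace E] {μ : Measure E}
    [IsFiniteMeasureOnCompacts μ] [NullSingletonClass μ] {w g q : E → ℝ} {s : Set E}
    (hs : s.Countable) (hw : Continuous w) (hwd : ∀ x ∉ s, DifferentiableAt ℝ w x)
    (hg : Continuous g) (hwg : ∀ x ∉ s, ‖fderiv ℝ w x‖ ≤ g x) (hq : ContDiff ℝ 1 q)
    (hqc : HasCompactSupport q) (v : E) :
    Integrable (fun x => fderiv ℝ (fun y => w y * q y) x v) μ := by
  have hae : ∀ᵐ x ∂μ, x ∉ s := measure_eq_zero_iff_ae_notMem.1 (hs.measure_zero μ)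
  have h1 : Integrable (fun x => w x * fderiv ℝ q x v) μ :=
    (hw.mul ((hq.continuous_fderiv one_ne_zero).clm_apply continuous_const)
      ).integrable_of_hasCompactSupport (hqc.fderiv_apply (𝕜 := ℝ) v).mul_left
  have h2 : Integrable (fun x => q x * fderiv ℝ w x v) μ := by
    have hmaj : Integrable (fun x => ‖q x‖ * (g x * ‖v‖)) μ :=
      (hq.continuous.norm.mul (hg.mul continuous_const)).integrable_of_hasCompactSupport
        hqc.norm.mul_right
    refine hmaj.mono' (hq.continuous.aestronglyMeasurable.mul
        (measurable_fderiv_apply_const ℝ w v).aestronglyMeasurable) ?_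
    filter_upwards [hae] with x hx
    rw [norm_mul]
    gcongr
    exact ((fderiv ℝ w x).le_opNorm v).trans (by gcongr; exact hwg x hx)
  refine (h1.add h2).congr ?_
  filter_upwards [hae] with x hx
  simp [fderiv_fun_mul (hwd x hx) (hq.differentiable one_ne_zero x)]

end Calculus

section Weight

variable {E : Type*} [NormedAddCommGroup E] [InnerProductSpace ℝ E]

theorem hasFDerivAt_one_add_norm_rpow (p : ℝ) {x : E} (hx : x ≠ 0) :
    HasFDerivAt (fun y : E => (1 + ‖y‖) ^ p)
      ((p * (1 + ‖x‖) ^ (p - 1)) • fderiv ℝ (fun y : E => ‖y‖) x) x := by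
  have hnorm : HasFDerivAt (fun y : E => 1 + ‖y‖) (fderiv ℝ (fun y : E => ‖y‖) x) x :=
    ((contDiffAt_norm ℝ hx).differentiableAt one_ne_zero).hasFDerivAt.const_add 1
  exact (Real.hasDerivAt_rpow_const (Or.inl (by positivity))).comp_hasFDerivAt x hnorm

theorem norm_fderiv_one_add_norm_rpow_le (p : ℝ) {x : E} (hx : x ≠ 0) :
    ‖fderiv ℝ (fun y : E => (1 + ‖y‖) ^ p) x‖ ≤ |p| * (1 + ‖x‖) ^ p := by
  have : Nontrivial E := ⟨⟨x, 0, hx⟩⟩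
  rw [(hasFDerivAt_one_add_norm_rpow p hx).fderiv, norm_smul,
    norm_fderiv_norm ((contDiffAt_norm ℝ hx).differentiableAt one_ne_zero), mul_one,
    Real.norm_eq_abs, abs_mul, abs_of_pos (by positivity : (0 : ℝ) < (1 + ‖x‖) ^ (p - 1))]
  gcongr
  · exact le_add_of_nonneg_right (norm_nonneg x)
  · linarith

end Weight

section Divergence

variable {n : ℕ}

theorem integral_fderiv_apply_single_eq_zero (i : Fin n)
    {φ : EuclideanSpace ℝ (Fin n) → ℝ} {s : Set (EuclideanSpace ℝ (Fin n))} (hs : s.Countable)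
    (hφ : Continuous φ) (hφc : HasCompactSupport φ) (hd : ∀ x ∉ s, DifferentiableAt ℝ φ x)
    (hi : Integrable fun x => fderiv ℝ φ x (EuclideanSpace.single i 1)) :
    ∫ x, fderiv ℝ φ x (EuclideanSpace.single i 1) = 0 := by
  obtain ⟨m, rfl⟩ : ∃ m, n = m + 1 := Nat.exists_eq_add_one_of_ne_zero i.pos.ne'
  -- Divergence theorem on a cube `[-R, R]ⁿ` around the support, in the coordinates `Fin n → ℝ`.
  set L := PiLp.continuousLinearEquiv 2 ℝ (fun _ : Fin (m + 1) => ℝ)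
  obtain ⟨R, hR0, hR⟩ := hφc.isCompact.isBounded.subset_ball_lt 0 0
  have hout : ∀ y j, R ≤ |y j| → L.symm y ∉ tsupport φ := fun y j hy hy' =>
    hy.not_gt ((PiLp.norm_apply_le (L.symm y) j).trans_lt (mem_ball_zero_iff.1 (hR hy')))
  set g : (Fin (m + 1) → ℝ) → ℝ := fun y => fderiv ℝ φ (L.symm y) (EuclideanSpace.single i 1)
  have hmp := (EuclideanSpace.volume_preserving_symm_measurableEquiv_toLp (Fin (m + 1))).symm
  have hg : ∫ x, fderiv ℝ φ x (EuclideanSpace.single i 1) = ∫ y, g y :=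
    (hmp.integral_comp' (fun x => fderiv ℝ φ x (EuclideanSpace.single i 1))).symm
  have hg0 : ∀ y ∉ Set.Icc (fun _ => -R) (fun _ => R), g y = 0 := by
    intro y hy
    obtain ⟨j, hj⟩ : ∃ j, R ≤ |y j| := by
      by_contra! h
      exact hy ⟨fun j => (abs_lt.1 (h j)).1.le, fun j => (abs_lt.1 (h j)).2.le⟩
    simp [g, fderiv_of_notMem_tsupport ℝ (hout y j hj)]
  have hgi : Integrable g :=
    (hmp.integrable_comp_emb (MeasurableEquiv.measurableEmbedding _)).2 hi
  set f' : Fin (m + 1) → (Fin (m + 1) → ℝ) → (Fin (m + 1) → ℝ) →L[ℝ] ℝ := fun j y =>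
    if j = i then (fderiv ℝ φ (L.symm y)).comp L.symm.toContinuousLinearMap else 0
  have hsum : (fun y => ∑ j, f' j y (Pi.single j 1)) = g := by
    ext y
    rw [Finset.sum_eq_single i (fun j _ hj => by simp [f', hj]) (by simp)]
    simp [f', g, L]
  have hdiv := integral_divergence_of_hasFDerivAt_off_countable' (fun _ => -R) (fun _ => R)
    (fun _ => by linarith) (fun j y => if j = i then φ (L.symm y) else 0) f'
    (L.symm ⁻¹' s) (hs.preimage L.symm.injective) (fun j => by split_ifs <;> fun_prop)
    (fun y hy j => by
      simp only [f']
      split_ifs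
      · exact (hd _ hy.2).hasFDerivAt.comp y L.symm.hasFDerivAt
      · exact hasFDerivAt_const 0 y)
    (by rw [hsum]; exact hgi.integrableOn)
  rw [hsum, setIntegral_eq_integral_of_forall_compl_eq_zero hg0] at hdiv
  rw [hg, hdiv]
  refine Finset.sum_eq_zero fun j _ => ?_
  have hface : ∀ c, R ≤ |c| → ∀ z, (if j = i then φ (L.symm (j.insertNth c z)) else 0) = 0 := by
    intro c hc z
    split_ifs
    · exact image_eq_zero_of_notMem_tsupport (hout _ j (by simpa using hc))
    · rfl
  simp only [hface R (le_abs_self R), hface (-R) (by rw [abs_neg]; exact le_abs_self R), sub_self]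

theorem integral_fderiv_mul_apply_single_eq_zero (i : Fin n)
    {w g q : EuclideanSpace ℝ (Fin n) → ℝ} {s : Set (EuclideanSpace ℝ (Fin n))}
    (hs : s.Countable) (hw : Continuous w) (hwd : ∀ x ∉ s, DifferentiableAt ℝ w x)
    (hg : Continuous g) (hwg : ∀ x ∉ s, ‖fderiv ℝ w x‖ ≤ g x) (hq : ContDiff ℝ 1 q)
    (hqc : HasCompactSupport q) :
    ∫ x, fderiv ℝ (fun y => w y * q y) x (EuclideanSpace.single i 1) = 0 := by
  -- `volume` has no atoms only in positive dimension.
  obtain ⟨m, rfl⟩ : ∃ m, n = m + 1 := Nat.exists_eq_add_one_of_ne_zero i.pos.ne'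
  exact integral_fderiv_apply_single_eq_zero i hs (hw.mul hq.continuous) hqc.mul_left
    (fun x hx => (hwd x hx).mul (hq.differentiable one_ne_zero x))
    (integrable_fderiv_mul_apply hs hw hwd hg hwg hq hqc _)

end Divergence

local notation "ℝ³" => EuclideanSpace ℝ (Fin 3)

theorem abs_pderiv3_le_norm_fderiv (i : Fin 3) (f : ℝ³ → ℝ) (x : ℝ³) :
    |pderiv3 i f x| ≤ ‖fderiv ℝ f x‖ := by
  simpa [pderiv3] using (fderiv ℝ f x).le_opNorm (EuclideanSpace.single i 1)

section EnergyDensity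

variable {N : ℕ} {A0 B : ℝ → ℝ³ → Matrix (Fin N) (Fin N) ℝ}
  {A : Fin 3 → ℝ → ℝ³ → Matrix (Fin N) (Fin N) ℝ} {F U : ℝ → ℝ³ → Fin N → ℝ} {t : ℝ}

def energyDensity (A0 : ℝ → ℝ³ → Matrix (Fin N) (Fin N) ℝ) (U : ℝ → ℝ³ → Fin N → ℝ) :
    ℝ × ℝ³ → ℝ :=
  fun p => U p.1 p.2 ⬝ᵥ A0 p.1 p.2 *ᵥ U p.1 p.2

theorem fderiv_energyDensity_eq {x : ℝ³}
    (hA0 : ∀ j k, Differentiable ℝ fun p : ℝ × ℝ³ => A0 p.1 p.2 j k)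
    (hA : ∀ i j k, Differentiable ℝ fun p : ℝ × ℝ³ => A i p.1 p.2 j k)
    (hU : Differentiable ℝ fun p : ℝ × ℝ³ => U p.1 p.2)
    (hA0s : (A0 t x).IsSymm) (hAs : ∀ i, (A i t x).IsSymm)
    (hPDE : A0 t x *ᵥ fderiv ℝ (fun s => U s x) t 1 =
      ∑ i, A i t x *ᵥ pderiv3 i (U t) x + B t x *ᵥ U t x + F t x) :
    fderiv ℝ (energyDensity A0 U) (t, x) (1, 0) =
      ∑ i, pderiv3 i (fun y => U t y ⬝ᵥ A i t y *ᵥ U t y) x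
        + (U t x ⬝ᵥ (of fun j k => deriv (fun s => A0 s x j k) t) *ᵥ U t x
          - ∑ i, U t x ⬝ᵥ (of fun j k => pderiv3 i (fun y => A i t y j k) x) *ᵥ U t x
          + 2 * (U t x ⬝ᵥ B t x *ᵥ U t x) + 2 * (U t x ⬝ᵥ F t x)) := by
  have hslice : ∀ {G : Type} [NormedAddCommGroup G] [NormedSpace ℝ G] {f : ℝ × ℝ³ → G},
      Differentiable ℝ f → Differentiable ℝ fun y => f (t, y) :=
    fun hf => hf.comp ((differentiable_const t).prodMk differentiable_id)
  have hspace : ∀ i, pderiv3 i (fun y => U t y ⬝ᵥ A i t y *ᵥ U t y) x =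
      U t x ⬝ᵥ (of fun j k => pderiv3 i (fun y => A i t y j k) x) *ᵥ U t x
        + 2 * (U t x ⬝ᵥ A i t x *ᵥ pderiv3 i (U t) x) := fun i =>
    fderiv_dotProduct_mulVec_self_apply (hslice hU x) (fun j k => hslice (hA i j k) x) (hAs i) _
  have hA0t : ∀ j k, fderiv ℝ (fun p : ℝ × ℝ³ => A0 p.1 p.2 j k) (t, x) (1, 0) =
      deriv (fun s => A0 s x j k) t := fun j k =>
    (hA0 j k (t, x)).hasDerivAt_apply_prodMk.deriv.symm
  have hUt : fderiv ℝ (fun p : ℝ × ℝ³ => U p.1 p.2) (t, x) (1, 0) =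
      fderiv ℝ (fun s => U s x) t 1 :=
    (hU (t, x)).hasDerivAt_apply_prodMk.deriv.symm
  have htime : fderiv ℝ (energyDensity A0 U) (t, x) (1, 0) = _ :=
    fderiv_dotProduct_mulVec_self_apply (hU (t, x)) (fun j k => hA0 j k (t, x)) hA0s (1, 0)
  simp only [hA0t, hUt] at htime
  rw [htime, hPDE, dotProduct_add, dotProduct_add, dotProduct_sum]
  simp only [hspace, Finset.sum_add_distrib, ← Finset.mul_sum]
  ring

variable {c₀ a a' τ b L : ℝ} {w : ℝ³ → ℝ}

theorem mul_fderiv_energyDensity_le (hc₀ : 0 < c₀) (ha : 0 ≤ a) (ha' : 0 ≤ a') (hτ : 0 ≤ τ)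
    (hb : 0 ≤ b) {x : ℝ³} (hw : DifferentiableAt ℝ w x) (hw0 : 0 < w x)
    (hL : ‖fderiv ℝ w x‖ ≤ L * w x)
    (hA0 : ∀ j k, Differentiable ℝ fun p : ℝ × ℝ³ => A0 p.1 p.2 j k)
    (hA : ∀ i j k, Differentiable ℝ fun p : ℝ × ℝ³ => A i p.1 p.2 j k)
    (hU : Differentiable ℝ fun p : ℝ × ℝ³ => U p.1 p.2)
    (hA0s : (A0 t x).IsSymm) (hAs : ∀ i, (A i t x).IsSymm)
    (hpos : c₀⁻¹ * (U t x ⬝ᵥ U t x) ≤ U t x ⬝ᵥ A0 t x *ᵥ U t x)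
    (hAa : ∀ i j k, |A i t x j k| ≤ a)
    (hAa' : ∀ j k, ∑ i, |pderiv3 i (fun y => A i t y j k) x| ≤ a')
    (hA0τ : ∀ j k, |deriv (fun s => A0 s x j k) t| ≤ τ) (hBb : ∀ j k, |B t x j k| ≤ b)
    (hPDE : A0 t x *ᵥ fderiv ℝ (fun s => U s x) t 1 =
      ∑ i, A i t x *ᵥ pderiv3 i (U t) x + B t x *ᵥ U t x + F t x) :
    w x * fderiv ℝ (energyDensity A0 U) (t, x) (1, 0) ≤
      ∑ i, pderiv3 i (fun y => w y * (U t y ⬝ᵥ A i t y *ᵥ U t y)) x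
        + (c₀ * (N * (τ + a' + 2 * b + 3 * L * a) + 1) + N) *
          (w x * (U t x ⬝ᵥ A0 t x *ᵥ U t x) + w x * ‖F t x‖ ^ 2) := by
  have hUt : Differentiable ℝ (U t) := hU.comp ((differentiable_const t).prodMk differentiable_id)
  have hq : ∀ i, DifferentiableAt ℝ (fun y => U t y ⬝ᵥ A i t y *ᵥ U t y) x := fun i =>
    (hUt x).dotProduct_mulVec (hUt x) fun j k =>
      (hA i j k).comp ((differentiable_const t).prodMk differentiable_id) x
  have hprod : ∀ i, pderiv3 i (fun y => w y * (U t y ⬝ᵥ A i t y *ᵥ U t y)) x =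
      w x * pderiv3 i (fun y => U t y ⬝ᵥ A i t y *ᵥ U t y) x
        + (U t x ⬝ᵥ A i t x *ᵥ U t x) * pderiv3 i w x := fun i => by
    simp only [pderiv3, fderiv_fun_mul hw (hq i), _root_.add_apply, _root_.smul_apply,
      smul_eq_mul]
  have huu : 0 ≤ U t x ⬝ᵥ U t x := by simpa using dotProduct_star_self_nonneg (U t x)
  have hflux : -∑ i, (U t x ⬝ᵥ A i t x *ᵥ U t x) * pderiv3 i w x ≤
      3 * (a * N * (U t x ⬝ᵥ U t x) * (L * w x)) := by
    have hi : ∀ i, -((U t x ⬝ᵥ A i t x *ᵥ U t x) * pderiv3 i w x) ≤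
        a * N * (U t x ⬝ᵥ U t x) * (L * w x) := fun i => by
      have hqi := abs_dotProduct_mulVec_le (u := U t x) ha (hAa i)
      rw [Fintype.card_fin] at hqi
      exact (neg_le_abs _).trans (abs_mul (U t x ⬝ᵥ A i t x *ᵥ U t x) _ ▸ mul_le_mul hqi
        ((abs_pderiv3_le_norm_fderiv i w x).trans hL) (abs_nonneg _) ((abs_nonneg _).trans hqi))
    rw [← Finset.sum_neg_distrib]
    exact (Finset.sum_le_sum fun i _ => hi i).trans (by simp)
  have hR := lowerOrderTerms_le (u := U t x) (f := F t x)
    (M₀ := of fun j k => deriv (fun s => A0 s x j k) t) (B := B t x)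
    (D := fun i => of fun j k => pderiv3 i (fun y => A i t y j k) x) hτ ha' hb hA0τ hAa' hBb
  rw [Fintype.card_fin] at hR
  have huQ : U t x ⬝ᵥ U t x ≤ c₀ * (U t x ⬝ᵥ A0 t x *ᵥ U t x) := (inv_mul_le_iff₀ hc₀).1 hpos
  have hQ : 0 ≤ U t x ⬝ᵥ A0 t x *ᵥ U t x := (mul_nonneg (inv_nonneg.2 hc₀.le) huu).trans hpos
  have hL0 : 0 ≤ L := nonneg_of_mul_nonneg_left ((norm_nonneg _).trans hL) hw0
  have hK : 0 ≤ N * (τ + a' + 2 * b + 3 * L * a) + 1 := by positivity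
  rw [fderiv_energyDensity_eq hA0 hA hU hA0s hAs hPDE]
  simp only [hprod, Finset.sum_add_distrib, ← Finset.mul_sum]
  have := mul_le_mul_of_nonneg_left hR hw0.le
  have := mul_le_mul_of_nonneg_left huQ (mul_nonneg hK hw0.le)
  have := mul_nonneg (mul_nonneg N.cast_nonneg hw0.le) hQ
  have := mul_nonneg (mul_nonneg (mul_nonneg hc₀.le hK) hw0.le) (sq_nonneg ‖F t x‖)
  linarith

theorem integral_mul_fderiv_energyDensity_le (hc₀ : 0 < c₀) (ha : 0 ≤ a) (ha' : 0 ≤ a')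
    (hτ : 0 ≤ τ) (hb : 0 ≤ b) {s : Set ℝ³} (hs : s.Countable) (hw : Continuous w)
    (hw0 : ∀ x, 0 < w x) (hwd : ∀ x ∉ s, DifferentiableAt ℝ w x)
    (hL : ∀ x ∉ s, ‖fderiv ℝ w x‖ ≤ L * w x)
    (hA0 : ∀ j k, ContDiff ℝ 1 fun p : ℝ × ℝ³ => A0 p.1 p.2 j k)
    (hA : ∀ i j k, ContDiff ℝ 1 fun p : ℝ × ℝ³ => A i p.1 p.2 j k)
    (hU : ContDiff ℝ 1 fun p : ℝ × ℝ³ => U p.1 p.2)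
    {K : Set ℝ³} (hK : IsCompact K) (hUK : ∀ x ∉ K, U t x = 0)
    (hA0s : ∀ x, (A0 t x).IsSymm) (hAs : ∀ i x, (A i t x).IsSymm)
    (hpos : ∀ x, c₀⁻¹ * (U t x ⬝ᵥ U t x) ≤ U t x ⬝ᵥ A0 t x *ᵥ U t x)
    (hAa : ∀ i x j k, |A i t x j k| ≤ a)
    (hAa' : ∀ x j k, ∑ i, |pderiv3 i (fun y => A i t y j k) x| ≤ a')
    (hA0τ : ∀ x j k, |deriv (fun s => A0 s x j k) t| ≤ τ) (hBb : ∀ x j k, |B t x j k| ≤ b)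
    (hFi : Integrable fun x => w x * ‖F t x‖ ^ 2)
    (hPDE : ∀ x, A0 t x *ᵥ fderiv ℝ (fun s => U s x) t 1 =
      ∑ i, A i t x *ᵥ pderiv3 i (U t) x + B t x *ᵥ U t x + F t x) :
    ∫ x, w x * fderiv ℝ (energyDensity A0 U) (t, x) (1, 0) ≤
      (c₀ * (N * (τ + a' + 2 * b + 3 * L * a) + 1) + N) *
        ((∫ x, w x * (U t x ⬝ᵥ A0 t x *ᵥ U t x)) + ∫ x, w x * ‖F t x‖ ^ 2) := by
  set C := c₀ * (N * (τ + a' + 2 * b + 3 * L * a) + 1) + N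
  have hUt : ContDiff ℝ 1 (U t) := hU.comp (contDiff_const.prodMk contDiff_id)
  have hQ : ContDiff ℝ 1 (energyDensity A0 U) :=
    hU.dotProduct_mulVec hU hA0
  have hq : ∀ i, ContDiff ℝ 1 fun y => U t y ⬝ᵥ A i t y *ᵥ U t y := fun i =>
    hUt.dotProduct_mulVec hUt fun j k => (hA i j k).comp (contDiff_const.prodMk contDiff_id)
  have hqc : ∀ i, HasCompactSupport fun y => U t y ⬝ᵥ A i t y *ᵥ U t y := fun i =>
    HasCompactSupport.intro hK fun x hx => by simp [hUK x hx]
  have hpt : ∀ᵐ x, w x * fderiv ℝ (energyDensity A0 U)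
      (t, x) (1, 0) ≤ ∑ i, pderiv3 i (fun y => w y * (U t y ⬝ᵥ A i t y *ᵥ U t y)) x
        + C * (w x * (U t x ⬝ᵥ A0 t x *ᵥ U t x) + w x * ‖F t x‖ ^ 2) := by
    filter_upwards [measure_eq_zero_iff_ae_notMem.1 (hs.measure_zero volume)] with x hx
    exact mul_fderiv_energyDensity_le hc₀ ha ha' hτ hb (hwd x hx) (hw0 x) (hL x hx)
      (fun j k => (hA0 j k).differentiable one_ne_zero)
      (fun i j k => (hA i j k).differentiable one_ne_zero) (hU.differentiable one_ne_zero)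
      (hA0s x) (fun i => hAs i x) (hpos x) (fun i => hAa i x) (hAa' x) (hA0τ x) (hBb x) (hPDE x)
  have hlhs : Integrable fun x =>
      w x * fderiv ℝ (energyDensity A0 U) (t, x) (1, 0) := by
    refine (hw.mul (((hQ.continuous_fderiv one_ne_zero).comp (Continuous.prodMk_right t)
      ).clm_apply continuous_const)).integrable_of_hasCompactSupport
      (HasCompactSupport.intro hK fun x hx => ?_)
    show w x * fderiv ℝ (energyDensity A0 U) (t, x) (1, 0) = 0
    unfold energyDensity
    rw [fderiv_dotProduct_mulVec_self_apply (x := (t, x)) (hU.differentiable one_ne_zero _)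
      (fun j k => (hA0 j k).differentiable one_ne_zero _) (hA0s x)]
    simp [hUK x hx]
  have hflux_i : ∀ i, Integrable fun x =>
      pderiv3 i (fun y => w y * (U t y ⬝ᵥ A i t y *ᵥ U t y)) x := fun i =>
    integrable_fderiv_mul_apply hs hw hwd (continuous_const.mul hw) hL (hq i) (hqc i) _
  have hflux : Integrable fun x =>
      ∑ i, pderiv3 i (fun y => w y * (U t y ⬝ᵥ A i t y *ᵥ U t y)) x :=
    integrable_finsetSum _ fun i _ => hflux_i i
  have hWQ : Integrable fun x => w x * (U t x ⬝ᵥ A0 t x *ᵥ U t x) :=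
    (hw.mul (hQ.continuous.comp (Continuous.prodMk_right t))).integrable_of_hasCompactSupport
      (HasCompactSupport.intro hK fun x hx => by simp [energyDensity, hUK x hx])
  have hrest : Integrable fun x =>
      C * (w x * (U t x ⬝ᵥ A0 t x *ᵥ U t x) + w x * ‖F t x‖ ^ 2) :=
    (hWQ.add hFi).const_mul C
  calc _ ≤ ∫ x, (∑ i, pderiv3 i (fun y => w y * (U t y ⬝ᵥ A i t y *ᵥ U t y)) x
        + C * (w x * (U t x ⬝ᵥ A0 t x *ᵥ U t x) + w x * ‖F t x‖ ^ 2)) :=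
      integral_mono_ae hlhs (hflux.add hrest) hpt
    _ = _ := by
      rw [integral_add hflux hrest, integral_finsetSum _ fun i _ => hflux_i i, integral_const_mul,
        integral_add hWQ hFi]
      simp [pderiv3, integral_fderiv_mul_apply_single_eq_zero _ hs hw hwd
        (continuous_const.mul hw) hL (hq _) (hqc _)]

end EnergyDensity

theorem stmt14_general (N : ℕ) (δ T c₀ a a' τ b : ℝ)
    (hc₀ : 1 ≤ c₀) (ha : 0 ≤ a) (ha' : 0 ≤ a') (hτ : 0 ≤ τ) (hb : 0 ≤ b) :
    ∃ C : ℝ, 0 < C ∧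
      ∀ (A0 : ℝ → EuclideanSpace ℝ (Fin 3) → Matrix (Fin N) (Fin N) ℝ)
        (A : Fin 3 → ℝ → EuclideanSpace ℝ (Fin 3) → Matrix (Fin N) (Fin N) ℝ)
        (B : ℝ → EuclideanSpace ℝ (Fin 3) → Matrix (Fin N) (Fin N) ℝ)
        (F : ℝ → EuclideanSpace ℝ (Fin 3) → Fin N → ℝ)
        (U : ℝ → EuclideanSpace ℝ (Fin 3) → Fin N → ℝ),
        -- `A⁰` and the `Aᵃ` are continuously differentiable
        (∀ j k : Fin N,
          ContDiff ℝ 1 fun p : ℝ × EuclideanSpace ℝ (Fin 3) => A0 p.1 p.2 j k) →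
        (∀ (i : Fin 3) (j k : Fin N),
          ContDiff ℝ 1 fun p : ℝ × EuclideanSpace ℝ (Fin 3) => A i p.1 p.2 j k) →
        -- symmetry
        (∀ t ∈ Set.Icc 0 T, ∀ x, (A0 t x).IsSymm) →
        (∀ i : Fin 3, ∀ t ∈ Set.Icc 0 T, ∀ x, (A i t x).IsSymm) →
        -- uniform positive definiteness of `A⁰`
        (∀ t ∈ Set.Icc 0 T, ∀ x, ∀ V : Fin N → ℝ,
          c₀⁻¹ * (V ⬝ᵥ V) ≤ V ⬝ᵥ (A0 t x).mulVec V ∧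
            V ⬝ᵥ (A0 t x).mulVec V ≤ c₀ * (V ⬝ᵥ V)) →
        -- bounds `‖Aᵃ‖ ≤ a`, `Σₐ‖∂ₐAᵃ‖ ≤ a'`, `‖∂ₜA⁰‖ ≤ τ`
        (∀ i : Fin 3, ∀ t ∈ Set.Icc 0 T, ∀ x, ∀ j k : Fin N, |A i t x j k| ≤ a) →
        (∀ t ∈ Set.Icc 0 T, ∀ x, ∀ j k : Fin N,
          (∑ i : Fin 3, |pderiv3 i (fun y => A i t y j k) x|) ≤ a') →
        (∀ t ∈ Set.Icc 0 T, ∀ x, ∀ j k : Fin N,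
          |deriv (fun s => A0 s x j k) t| ≤ τ) →
        -- `B` continuous and bounded by `b`
        (∀ j k : Fin N,
          Continuous fun p : ℝ × EuclideanSpace ℝ (Fin 3) => B p.1 p.2 j k) →
        (∀ t ∈ Set.Icc 0 T, ∀ x, ∀ j k : Fin N, |B t x j k| ≤ b) →
        -- `F` continuous with finite weighted `L²` norm
        Continuous (fun p : ℝ × EuclideanSpace ℝ (Fin 3) => F p.1 p.2) →
        (∀ t ∈ Set.Icc 0 T,
          Integrable fun x : EuclideanSpace ℝ (Fin 3) =>
            (1 + ‖x‖) ^ (2 * δ) * ‖F t x‖ ^ 2) →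
        -- `U` is `C¹` with support in `[0,T] × K`, `K` compact
        ContDiff ℝ 1 (fun p : ℝ × EuclideanSpace ℝ (Fin 3) => U p.1 p.2) →
        (∃ K : Set (EuclideanSpace ℝ (Fin 3)), IsCompact K ∧
          ∀ t ∈ Set.Icc 0 T, ∀ x, x ∉ K → U t x = 0) →
        -- the symmetric hyperbolic system `A⁰∂ₜU = Σₐ Aᵃ∂ₐU + BU + F`
        (∀ t ∈ Set.Icc 0 T, ∀ x,
          (A0 t x).mulVec (fderiv ℝ (fun s => U s x) t 1) =
            (∑ i : Fin 3, (A i t x).mulVec (pderiv3 i (U t) x)) +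
              (B t x).mulVec (U t x) + F t x) →
        -- conclusion: the energy inequality `E'(t) ≤ C(E(t) + ‖F(t)‖²_{L²_δ})`
        ∀ t ∈ Set.Ioo 0 T, ∃ d : ℝ,
          HasDerivAt (fun s => ∫ x : EuclideanSpace ℝ (Fin 3),
              (1 + ‖x‖) ^ (2 * δ) * (U s x ⬝ᵥ (A0 s x).mulVec (U s x))) d t ∧
          d ≤ C * ((∫ x : EuclideanSpace ℝ (Fin 3),
              (1 + ‖x‖) ^ (2 * δ) * (U t x ⬝ᵥ (A0 t x).mulVec (U t x))) +
            ∫ x : EuclideanSpace ℝ (Fin 3), (1 + ‖x‖) ^ (2 * δ) * ‖F t x‖ ^ 2) := by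
  have hc₀' : 0 < c₀ := by linarith
  refine ⟨c₀ * (N * (τ + a' + 2 * b + 3 * |2 * δ| * a) + 1) + N, by positivity, ?_⟩
  intro A0 A B F U hA0 hA hA0s hAs hpos hAa hAa' hA0τ _ hBb _ hFi hU ⟨K, hK, hUK⟩ hPDE t ht
  have htT : t ∈ Set.Icc 0 T := Set.Ioo_subset_Icc_self ht
  have hw : Continuous fun x : ℝ³ => (1 + ‖x‖) ^ (2 * δ) :=
    (continuous_const.add continuous_norm).rpow_const fun x =>
      Or.inl (by positivity : (0 : ℝ) < 1 + ‖x‖).ne'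
  refine ⟨_, hasDerivAt_integral_mul_of_contDiff hw (hU.dotProduct_mulVec hU hA0) hK isOpen_Ioo
    (fun s hs x hx => by simp [hUK s (Set.Ioo_subset_Icc_self hs) x hx]) ht, ?_⟩
  exact integral_mul_fderiv_energyDensity_le hc₀' ha ha' hτ hb
    (Set.countable_singleton 0) hw (fun x => by positivity)
    (fun x hx => (hasFDerivAt_one_add_norm_rpow _ hx).differentiableAt)
    (fun x hx => norm_fderiv_one_add_norm_rpow_le _ hx) hA0 hA hU hK (hUK t htT) (hA0s t htT)
    (fun i => hAs i t htT) (fun x => (hpos t htT x _).1) (fun i => hAa i t htT) (hAa' t htT)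
    (hA0τ t htT) (hBb t htT) (hFi t htT) (hPDE t htT)

/-- Weighted `L²` energy estimate for linear first-order symmetric hyperbolic
systems `A⁰∂ₜU = Σₐ Aᵃ∂ₐU + BU + F` with uniformly positive definite symmetric
`A⁰`: the energy `E(t) = ∫(1+|x|)^{2δ} Uᵀ A⁰ U dx` satisfies
`E'(t) ≤ C (E(t) + ∫(1+|x|)^{2δ}|F|²dx)`, with `C` depending only on
`δ, c₀, a, a', τ, b`. -/
theorem stmt14 (N : ℕ) (hN : 0 < N) (δ T c₀ a a' τ b : ℝ)
    (hT : 0 < T) (hc₀ : 1 ≤ c₀) (ha : 0 ≤ a) (ha' : 0 ≤ a') (hτ : 0 ≤ τ) (hb : 0 ≤ b) :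
    ∃ C : ℝ, 0 < C ∧
      ∀ (A0 : ℝ → EuclideanSpace ℝ (Fin 3) → Matrix (Fin N) (Fin N) ℝ)
        (A : Fin 3 → ℝ → EuclideanSpace ℝ (Fin 3) → Matrix (Fin N) (Fin N) ℝ)
        (B : ℝ → EuclideanSpace ℝ (Fin 3) → Matrix (Fin N) (Fin N) ℝ)
        (F : ℝ → EuclideanSpace ℝ (Fin 3) → Fin N → ℝ)
        (U : ℝ → EuclideanSpace ℝ (Fin 3) → Fin N → ℝ),
        -- `A⁰` and the `Aᵃ` are continuously differentiable
        (∀ j k : Fin N,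
          ContDiff ℝ 1 fun p : ℝ × EuclideanSpace ℝ (Fin 3) => A0 p.1 p.2 j k) →
        (∀ (i : Fin 3) (j k : Fin N),
          ContDiff ℝ 1 fun p : ℝ × EuclideanSpace ℝ (Fin 3) => A i p.1 p.2 j k) →
        -- symmetry
        (∀ t ∈ Set.Icc 0 T, ∀ x, (A0 t x).IsSymm) →
        (∀ i : Fin 3, ∀ t ∈ Set.Icc 0 T, ∀ x, (A i t x).IsSymm) →
        -- uniform positive definiteness of `A⁰`
        (∀ t ∈ Set.Icc 0 T, ∀ x, ∀ V : Fin N → ℝ,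
          c₀⁻¹ * (V ⬝ᵥ V) ≤ V ⬝ᵥ (A0 t x).mulVec V ∧
            V ⬝ᵥ (A0 t x).mulVec V ≤ c₀ * (V ⬝ᵥ V)) →
        -- bounds `‖Aᵃ‖ ≤ a`, `Σₐ‖∂ₐAᵃ‖ ≤ a'`, `‖∂ₜA⁰‖ ≤ τ`
        (∀ i : Fin 3, ∀ t ∈ Set.Icc 0 T, ∀ x, ∀ j k : Fin N, |A i t x j k| ≤ a) →
        (∀ t ∈ Set.Icc 0 T, ∀ x, ∀ j k : Fin N,
          (∑ i : Fin 3, |pderiv3 i (fun y => A i t y j k) x|) ≤ a') →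
        (∀ t ∈ Set.Icc 0 T, ∀ x, ∀ j k : Fin N,
          |deriv (fun s => A0 s x j k) t| ≤ τ) →
        -- `B` continuous and bounded by `b`
        (∀ j k : Fin N,
          Continuous fun p : ℝ × EuclideanSpace ℝ (Fin 3) => B p.1 p.2 j k) →
        (∀ t ∈ Set.Icc 0 T, ∀ x, ∀ j k : Fin N, |B t x j k| ≤ b) →
        -- `F` continuous with finite weighted `L²` norm
        Continuous (fun p : ℝ × EuclideanSpace ℝ (Fin 3) => F p.1 p.2) →
        (∀ t ∈ Set.Icc 0 T,
          Integrable fun x : EuclideanSpace ℝ (Fin 3) =>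
            (1 + ‖x‖) ^ (2 * δ) * ‖F t x‖ ^ 2) →
        -- `U` is `C¹` with support in `[0,T] × K`, `K` compact
        ContDiff ℝ 1 (fun p : ℝ × EuclideanSpace ℝ (Fin 3) => U p.1 p.2) →
        (∃ K : Set (EuclideanSpace ℝ (Fin 3)), IsCompact K ∧
          ∀ t ∈ Set.Icc 0 T, ∀ x, x ∉ K → U t x = 0) →
        -- the symmetric hyperbolic system `A⁰∂ₜU = Σₐ Aᵃ∂ₐU + BU + F`
        (∀ t ∈ Set.Icc 0 T, ∀ x,
          (A0 t x).mulVec (fderiv ℝ (fun s => U s x) t 1) =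
            (∑ i : Fin 3, (A i t x).mulVec (pderiv3 i (U t) x)) +
              (B t x).mulVec (U t x) + F t x) →
        -- conclusion: the energy inequality `E'(t) ≤ C(E(t) + ‖F(t)‖²_{L²_δ})`
        ∀ t ∈ Set.Ioo 0 T, ∃ d : ℝ,
          HasDerivAt (fun s => ∫ x : EuclideanSpace ℝ (Fin 3),
              (1 + ‖x‖) ^ (2 * δ) * (U s x ⬝ᵥ (A0 s x).mulVec (U s x))) d t ∧
          d ≤ C * ((∫ x : EuclideanSpace ℝ (Fin 3),
              (1 + ‖x‖) ^ (2 * δ) * (U t x ⬝ᵥ (A0 t x).mulVec (U t x))) +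
            ∫ x : EuclideanSpace ℝ (Fin 3), (1 + ‖x‖) ^ (2 * δ) * ‖F t x‖ ^ 2) :=
  stmt14_general N δ T c₀ a a' τ b hc₀ ha ha' hτ hb
end
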